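/- arXiv:2605.01778 — 2 statements merged into one kernel-verified Lean document; each statement's English description precedes it below -/
import Mathlib

section
/- Let {X_t}_{t≤T} be a real-valued martingale difference sequence adapted to a filtration {F_t}, with |X_t| ≤ R almost surely. Then for any η ∈ (0, 1/R], with probability at least 1−δ, ∑_{t=1}^T X_t ≤ η·∑_{t=1}^T E[X_t² | F_{t−1}] + log(1/δ)/η. -/
/-!
For `|x| ≤ 1` one has `exp x ≤ 1 + x + x²`. Hence a centred increment with `|η X_t| ≤ 1` satisfies
`E[exp (η X_t) | ℱ_{t-1}] ≤ 1 + η² V_t ≤ exp (η² V_t)`, where `V_t = E[X_t² | ℱ_{t-1}]`, so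
`exp (η ∑ X_t - η² ∑ V_t)` is a supermartingale started at `1`. Its expectation is therefore at
most `1`, and Chernoff's bound at level `log (1/δ)` gives the inequality.
-/

open MeasureTheory ProbabilityTheory Real Finset

theorem Real.exp_le_one_add_add_sq {x : ℝ} (hx : |x| ≤ 1) : exp x ≤ 1 + x + x ^ 2 := by
  linarith [(abs_le.1 (abs_exp_sub_one_sub_id_le hx)).2]

section

variable {Ω : Type*} {m0 : MeasurableSpace Ω} {μ : Measure Ω}

theorem integrable_exp_mul_of_abs_le [IsFiniteMeasure μ] {X : Ω → ℝ} {R : ℝ}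
    (hX : AEStronglyMeasurable X μ) (hXR : ∀ᵐ ω ∂μ, |X ω| ≤ R) (η : ℝ) :
    Integrable (fun ω => exp (η * X ω)) μ := by
  refine .of_bound (continuous_exp.comp_aestronglyMeasurable (hX.const_mul η)) (exp (|η| * R)) ?_
  filter_upwards [hXR] with ω hω
  rw [Real.norm_eq_abs, abs_of_pos (exp_pos _)]
  exact exp_le_exp.2 ((le_abs_self _).trans (abs_mul η _ ▸ by gcongr))

theorem condExp_exp_mul_le [IsFiniteMeasure μ] {m : MeasurableSpace Ω} (hm : m ≤ m0)
    {X : Ω → ℝ} {R η : ℝ} (hX : AEStronglyMeasurable[m0] X μ) (hXR : ∀ᵐ ω ∂μ, |X ω| ≤ R)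
    (hηR : |η| * R ≤ 1) (hmean : μ[X | m] =ᵐ[μ] 0) :
    μ[fun ω => exp (η * X ω) | m] ≤ᵐ[μ] fun ω => exp (η ^ 2 * (μ[fun ω => X ω ^ 2 | m]) ω) := by
  have hηX : ∀ᵐ ω ∂μ, |η * X ω| ≤ 1 := by
    filter_upwards [hXR] with ω hω
    rw [abs_mul]
    exact (mul_le_mul_of_nonneg_left hω (abs_nonneg η)).trans hηR
  have hX_int : Integrable X μ := .of_bound hX R (by simpa only [Real.norm_eq_abs] using hXR)
  have hX2_int : Integrable (fun ω => X ω ^ 2) μ := by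
    refine .of_bound (hX.pow 2) (R ^ 2) ?_
    filter_upwards [hXR] with ω hω
    rw [Real.norm_eq_abs, abs_pow]
    exact pow_le_pow_left₀ (abs_nonneg _) hω 2
  have hquad_int : Integrable ((fun _ => (1 : ℝ)) + η • X + η ^ 2 • fun ω => X ω ^ 2) μ :=
    ((integrable_const 1).add (hX_int.smul η)).add (hX2_int.smul (η ^ 2))
  have hexp_le_quad : (fun ω => exp (η * X ω)) ≤ᵐ[μ]
      (fun _ => (1 : ℝ)) + η • X + η ^ 2 • fun ω => X ω ^ 2 := by
    filter_upwards [hηX] with ω hω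
    simpa only [Pi.add_apply, Pi.smul_apply, smul_eq_mul, mul_pow] using exp_le_one_add_add_sq hω
  have hcondExp_quad : μ[(fun _ => (1 : ℝ)) + η • X + η ^ 2 • fun ω => X ω ^ 2 | m] =ᵐ[μ]
      fun ω => 1 + η ^ 2 * (μ[fun ω => X ω ^ 2 | m]) ω := by
    filter_upwards [condExp_add ((integrable_const 1).add (hX_int.smul η)) (hX2_int.smul (η ^ 2)) m,
      condExp_add (integrable_const 1) (hX_int.smul η) m, condExp_smul η X m,
      condExp_smul (η ^ 2) (fun ω => X ω ^ 2) m, hmean] with ω h1 h2 h3 h4 h5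
    simp only [h1, h2, h3, h4, h5, Pi.add_apply, Pi.smul_apply, Pi.zero_apply, smul_eq_mul,
      condExp_const hm]
    ring
  filter_upwards [condExp_mono (integrable_exp_mul_of_abs_le hX hXR η) hquad_int hexp_le_quad,
    hcondExp_quad] with ω hmono hquad
  calc (μ[fun ω => exp (η * X ω) | m]) ω
      ≤ 1 + η ^ 2 * (μ[fun ω => X ω ^ 2 | m]) ω := hmono.trans_eq hquad
    _ ≤ exp (η ^ 2 * (μ[fun ω => X ω ^ 2 | m]) ω) := (add_comm _ _).trans_le (add_one_le_exp _)

theorem ofReal_one_sub_le_measure_le_of_mgf_le_one [IsProbabilityMeasure μ] {Z : Ω → ℝ}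
    {t δ : ℝ} (hZ : AEMeasurable Z μ) (ht : 0 < t) (hδ : 0 < δ)
    (hint : Integrable (fun ω => exp (t * Z ω)) μ) (hmgf : mgf Z μ t ≤ 1) :
    ENNReal.ofReal (1 - δ) ≤ μ {ω | Z ω ≤ log (1 / δ) / t} := by
  set c := log (1 / δ) / t
  have htail : μ.real {ω | c ≤ Z ω} ≤ δ :=
    calc μ.real {ω | c ≤ Z ω} ≤ exp (-t * c) * mgf Z μ t := measure_ge_le_exp_mul_mgf c ht.le hint
      _ ≤ δ := by
        rw [neg_mul, mul_div_cancel₀ _ ht.ne', exp_neg, exp_log (by positivity), inv_div, div_one]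
        exact mul_le_of_le_one_right hδ.le hmgf
  have hcompl : {ω | Z ω ≤ c}ᶜ ⊆ {ω | c ≤ Z ω} :=
    fun ω hω => le_of_not_ge (Set.notMem_ofPred_iff.1 hω)
  have hprob : μ.real {ω | Z ω ≤ c}ᶜ = 1 - μ.real {ω | Z ω ≤ c} :=
    probReal_compl_eq_one_sub₀ (nullMeasurableSet_le hZ aemeasurable_const)
  refine ENNReal.ofReal_le_of_le_toReal ?_
  linarith [measureReal_mono hcompl (μ := μ), measureReal_def μ {ω | Z ω ≤ c}]

variable {ℱ : Filtration ℕ m0} {X : ℕ → Ω → ℝ} {R η : ℝ}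

noncomputable def freedmanProcess (μ : Measure Ω) (ℱ : Filtration ℕ m0) (X : ℕ → Ω → ℝ) (η : ℝ)
    (n : ℕ) (ω : Ω) : ℝ :=
  exp (η * ∑ t ∈ Icc 1 n, X t ω - η ^ 2 * ∑ t ∈ Icc 1 n, (μ[fun ω' => X t ω' ^ 2 | ℱ (t - 1)]) ω)

theorem freedmanProcess_pos (n : ℕ) (ω : Ω) : 0 < freedmanProcess μ ℱ X η n ω :=
  exp_pos _

theorem freedmanProcess_zero : freedmanProcess μ ℱ X η 0 = 1 := by
  ext ω
  simp [freedmanProcess]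

theorem freedmanProcess_succ (n : ℕ) (ω : Ω) :
    freedmanProcess μ ℱ X η (n + 1) ω = freedmanProcess μ ℱ X η n ω *
      exp (-(η ^ 2 * (μ[fun ω' => X (n + 1) ω' ^ 2 | ℱ n]) ω)) * exp (η * X (n + 1) ω) := by
  simp only [freedmanProcess, ← exp_add, sum_Icc_succ_top (Nat.le_add_left 1 n),
    Nat.add_sub_cancel]
  ring_nf

theorem adapted_freedmanProcess (hX : Adapted ℱ X) : Adapted ℱ (freedmanProcess μ ℱ X η) := by
  intro n
  have hcondExp : ∀ t ∈ Icc 1 n, Measurable[ℱ n] (μ[fun ω' => X t ω' ^ 2 | ℱ (t - 1)]) :=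
    fun t ht =>
      (stronglyMeasurable_condExp.mono (ℱ.mono ((t.sub_le 1).trans (mem_Icc.1 ht).2))).measurable
  exact ((measurable_const.mul (measurable_sum _ fun t ht => hX.measurable_le (mem_Icc.1 ht).2)).sub
    (measurable_const.mul (measurable_sum _ hcondExp))).exp

theorem freedmanProcess_le (hXR : ∀ t, ∀ᵐ ω ∂μ, |X t ω| ≤ R) (n : ℕ) :
    ∀ᵐ ω ∂μ, freedmanProcess μ ℱ X η n ω ≤ exp (n * (|η| * R)) := by
  have hcondExp_nonneg : ∀ t, 0 ≤ᵐ[μ] μ[fun ω' => X t ω' ^ 2 | ℱ (t - 1)] :=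
    fun t => condExp_nonneg (.of_forall fun ω => sq_nonneg _)
  filter_upwards [ae_all_iff.2 hXR, ae_all_iff.2 hcondExp_nonneg] with ω hXω hVω
  refine exp_le_exp.2 ?_
  have hsum : η * ∑ t ∈ Icc 1 n, X t ω ≤ n * (|η| * R) :=
    calc η * ∑ t ∈ Icc 1 n, X t ω ≤ |η * ∑ t ∈ Icc 1 n, X t ω| := le_abs_self _
      _ ≤ |η| * ∑ t ∈ Icc 1 n, |X t ω| := by rw [abs_mul]; gcongr; exact abs_sum_le_sum_abs _ _
      _ ≤ |η| * ∑ t ∈ Icc 1 n, R := by gcongr with t; exact hXω t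
      _ = n * (|η| * R) := by
        simp only [sum_const, Nat.card_Icc, add_tsub_cancel_right, nsmul_eq_mul]
        ring
  have hvar : 0 ≤ η ^ 2 * ∑ t ∈ Icc 1 n, (μ[fun ω' => X t ω' ^ 2 | ℱ (t - 1)]) ω :=
    mul_nonneg (sq_nonneg η) (sum_nonneg fun t _ => hVω t)
  linarith

theorem integrable_freedmanProcess [IsFiniteMeasure μ] (hX : Adapted ℱ X)
    (hXR : ∀ t, ∀ᵐ ω ∂μ, |X t ω| ≤ R) (n : ℕ) : Integrable (freedmanProcess μ ℱ X η n) μ := by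
  refine .of_bound ((adapted_freedmanProcess hX n).mono (ℱ.le n) le_rfl).aestronglyMeasurable
    (exp (n * (|η| * R))) ?_
  filter_upwards [freedmanProcess_le hXR n] with ω hω
  rwa [Real.norm_eq_abs, abs_of_pos (freedmanProcess_pos n ω)]

theorem supermartingale_freedmanProcess [IsFiniteMeasure μ] (hX : Adapted ℱ X)
    (hXR : ∀ t, ∀ᵐ ω ∂μ, |X t ω| ≤ R) (hηR : |η| * R ≤ 1)
    (hmean : ∀ t, 1 ≤ t → μ[X t | ℱ (t - 1)] =ᵐ[μ] 0) :
    Supermartingale (freedmanProcess μ ℱ X η) ℱ μ := by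
  refine supermartingale_nat (adapted_freedmanProcess hX).stronglyAdapted
    (integrable_freedmanProcess hX hXR) fun n => ?_
  set V := μ[fun ω' => X (n + 1) ω' ^ 2 | ℱ n]
  set F := fun ω => freedmanProcess μ ℱ X η n ω * exp (-(η ^ 2 * V ω))
  have hF : StronglyMeasurable[ℱ n] F :=
    ((adapted_freedmanProcess hX n).mul
      (stronglyMeasurable_condExp.measurable.const_mul _).neg.exp).stronglyMeasurable
  have hsucc : freedmanProcess μ ℱ X η (n + 1) = F * fun ω => exp (η * X (n + 1) ω) :=
    funext (freedmanProcess_succ n)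
  have hXn : AEStronglyMeasurable (X (n + 1)) μ :=
    ((hX (n + 1)).mono (ℱ.le _) le_rfl).aestronglyMeasurable
  have hmgf := condExp_exp_mul_le (ℱ.le n) hXn (hXR (n + 1)) hηR
    (by simpa using hmean (n + 1) (Nat.le_add_left 1 n))
  have hpull := condExp_mul_of_stronglyMeasurable_left hF
    (hsucc ▸ integrable_freedmanProcess hX hXR (n + 1))
    (integrable_exp_mul_of_abs_le hXn (hXR (n + 1)) η)
  rw [hsucc]
  filter_upwards [hpull, hmgf] with ω hpullω hmgfω
  calc (μ[F * fun ω => exp (η * X (n + 1) ω) | ℱ n]) ω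
      = F ω * (μ[fun ω => exp (η * X (n + 1) ω) | ℱ n]) ω := hpullω
    _ ≤ F ω * exp (η ^ 2 * V ω) := by
      gcongr
      exact (mul_pos (freedmanProcess_pos n ω) (exp_pos _)).le
    _ = freedmanProcess μ ℱ X η n ω := by
      simp only [F, mul_assoc, ← exp_add, neg_add_cancel, exp_zero, mul_one]

theorem integral_freedmanProcess_le_one [IsProbabilityMeasure μ] (hX : Adapted ℱ X)
    (hXR : ∀ t, ∀ᵐ ω ∂μ, |X t ω| ≤ R) (hηR : |η| * R ≤ 1)
    (hmean : ∀ t, 1 ≤ t → μ[X t | ℱ (t - 1)] =ᵐ[μ] 0) (n : ℕ) :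
    ∫ ω, freedmanProcess μ ℱ X η n ω ∂μ ≤ 1 := by
  simpa [freedmanProcess_zero] using
    (supermartingale_freedmanProcess hX hXR hηR hmean).setIntegral_le (Nat.zero_le n) .univ

end

theorem freedman_inequality_general
    {Ω : Type*} {m0 : MeasurableSpace Ω} (μ : Measure Ω) [IsProbabilityMeasure μ]
    (ℱ : Filtration ℕ m0) (T : ℕ) (X : ℕ → Ω → ℝ) (R η δ : ℝ)
    (hadapted : Adapted ℱ X)
    (hmd : ∀ t, 1 ≤ t → μ[X t | ℱ (t - 1)] =ᵐ[μ] 0)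
    (hbdd : ∀ t, ∀ᵐ ω ∂μ, |X t ω| ≤ R)
    (hη : 0 < η) (hηR : η ≤ 1 / R) (hδ : 0 < δ) :
    ENNReal.ofReal (1 - δ) ≤
      μ {ω | ∑ t ∈ Finset.Icc 1 T, X t ω ≤
        η * ∑ t ∈ Finset.Icc 1 T, (μ[fun ω' => (X t ω') ^ 2 | ℱ (t - 1)]) ω
          + Real.log (1 / δ) / η} := by
  have hR : 0 < R := one_div_pos.1 (hη.trans_le hηR)
  have hηR' : |η| * R ≤ 1 := by rw [abs_of_pos hη]; exact (le_div_iff₀ hR).1 hηR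
  set Z := fun ω => ∑ t ∈ Icc 1 T, X t ω
    - η * ∑ t ∈ Icc 1 T, (μ[fun ω' => (X t ω') ^ 2 | ℱ (t - 1)]) ω
  have hZ : Measurable Z :=
    (measurable_sum _ fun t _ => (hadapted t).mono (ℱ.le t) le_rfl).sub (measurable_const.mul
      (measurable_sum _ fun t _ => stronglyMeasurable_condExp.measurable.mono (ℱ.le _) le_rfl))
  have hexpZ : (fun ω => exp (η * Z ω)) = freedmanProcess μ ℱ X η T := by
    ext ω
    simp only [Z, freedmanProcess]
    ring_nf
  have hmgf : mgf Z μ η ≤ 1 := by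
    rw [mgf, hexpZ]
    exact integral_freedmanProcess_le_one hadapted hbdd hηR' hmd T
  refine (ofReal_one_sub_le_measure_le_of_mgf_le_one hZ.aemeasurable hη hδ
    (hexpZ ▸ integrable_freedmanProcess hadapted hbdd T) hmgf).trans_eq (congrArg μ ?_)
  ext ω
  simp only [Z, Set.mem_ofPred_eq, sub_le_iff_le_add']

/-- Freedman's inequality: for a martingale difference sequence `X_t` with
`|X_t| ≤ R` a.s., for any `η ∈ (0, 1/R]`, with probability at least `1 − δ`,
`∑_{t=1}^T X_t ≤ η·∑_{t=1}^T E[X_t² | F_{t−1}] + log(1/δ)/η`. -/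
theorem freedman_inequality
    {Ω : Type*} {m0 : MeasurableSpace Ω} (μ : Measure Ω) [IsProbabilityMeasure μ]
    (ℱ : Filtration ℕ m0) (T : ℕ) (X : ℕ → Ω → ℝ) (R η δ : ℝ)
    (hR : 0 < R) (hadapted : Adapted ℱ X)
    (hint : ∀ t, Integrable (X t) μ)
    (hmd : ∀ t, 1 ≤ t → μ[X t | ℱ (t - 1)] =ᵐ[μ] 0)
    (hbdd : ∀ t, ∀ᵐ ω ∂μ, |X t ω| ≤ R)
    (hη : 0 < η) (hηR : η ≤ 1 / R) (hδ : 0 < δ) (hδ1 : δ ≤ 1) :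
    ENNReal.ofReal (1 - δ) ≤
      μ {ω | ∑ t ∈ Finset.Icc 1 T, X t ω ≤
        η * ∑ t ∈ Finset.Icc 1 T, (μ[fun ω' => (X t ω') ^ 2 | ℱ (t - 1)]) ω
          + Real.log (1 / δ) / η} :=
  freedman_inequality_general μ ℱ T X R η δ hadapted hmd hbdd hη hηR hδ
end

section
/- Fix a reward r, a Q-value function Q' and the optimal Q-value function Q^{*,r} under r, all taking values in [0,H] componentwise with rewards in [0,1]. Define, for a transition sample (s,a,s'), Z = (Q'_h(s,a) − r_h(s,a) − max_{a'} Q^{*,r}_{h+1}(s',a'))² − (Q^{*,r}_h(s,a) − r_h(s,a) − max_{a'} Q^{*,r}_{h+1}(s',a'))², where s' ∼ P_h(·|s,a). Then the conditional expectation of Z given (s,a) equals (Q'_h(s,a) − Q^{*,r}_h(s,a))², and the conditional variance of Z given (s,a) is at most 16H²·(Q'_h(s,a) − Q^{*,r}_h(s,a))². -/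
/-- Conditional mean and variance of the random variable `Z` from the squared
Bellman error analysis, evaluated against the optimal Q-function: the
conditional mean of `Z` given `(s,a)` equals `(Q'(s,a) − Q*(s,a))²` and the
conditional variance is at most `16H²(Q'(s,a) − Q*(s,a))²`. -/
theorem z_cond_mean_var
    {S A : Type*} [Fintype S] [Fintype A] [Nonempty A]
    (H : ℝ) (hH : 1 ≤ H)
    (r Q' Qstar Qnext : S → A → ℝ) (P : S → A → S → ℝ)
    (hr0 : ∀ s a, 0 ≤ r s a) (hr1 : ∀ s a, r s a ≤ 1)
    (hQ'0 : ∀ s a, 0 ≤ Q' s a) (hQ'H : ∀ s a, Q' s a ≤ H)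
    (hQs0 : ∀ s a, 0 ≤ Qstar s a) (hQsH : ∀ s a, Qstar s a ≤ H)
    (hQn0 : ∀ s a, 0 ≤ Qnext s a) (hQnH : ∀ s a, Qnext s a ≤ H)
    (hPnn : ∀ s a s', 0 ≤ P s a s') (hPsum : ∀ s a, ∑ s', P s a s' = 1)
    (hbellman : ∀ s a, Qstar s a = r s a + ∑ s', P s a s' *
      (Finset.univ.sup' Finset.univ_nonempty fun a' => Qnext s' a'))
    (s : S) (a : A) (Z : S → ℝ)
    (hZ : ∀ s', Z s' =
      (Q' s a - r s a -
        Finset.univ.sup' Finset.univ_nonempty (fun a' => Qnext s' a')) ^ 2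
      - (Qstar s a - r s a -
        Finset.univ.sup' Finset.univ_nonempty (fun a' => Qnext s' a')) ^ 2) :
    (∑ s', P s a s' * Z s' = (Q' s a - Qstar s a) ^ 2)
    ∧ (∑ s', P s a s' * (Z s' - ∑ s'', P s a s'' * Z s'') ^ 2 ≤
        16 * H ^ 2 * (Q' s a - Qstar s a) ^ 2) := by
  classical
  set m : S → ℝ := fun s' =>
    Finset.univ.sup' Finset.univ_nonempty fun a' => Qnext s' a' with hm
  have hm0 : ∀ s', 0 ≤ m s' := fun s' =>
    le_trans (hQn0 s' (Classical.arbitrary A))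
      (Finset.le_sup' _ (Finset.mem_univ _))
  have hmH : ∀ s', m s' ≤ H := fun s' =>
    Finset.sup'_le _ _ fun a' _ => hQnH s' a'
  set E : ℝ := ∑ s', P s a s' * m s' with hE
  have hE0 : 0 ≤ E :=
    Finset.sum_nonneg fun s' _ => mul_nonneg (hPnn s a s') (hm0 s')
  have hEH : E ≤ H := by
    calc E ≤ ∑ s', P s a s' * H :=
          Finset.sum_le_sum fun s' _ =>
            mul_le_mul_of_nonneg_left (hmH s') (hPnn s a s')
      _ = H := by rw [← Finset.sum_mul, hPsum]; ring
  have hEq : E = Qstar s a - r s a := by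
    have := hbellman s a; linarith
  have hZ' : ∀ s', Z s' = (Q' s a - Qstar s a) ^ 2
      + 2 * (Q' s a - Qstar s a) * ((Qstar s a - r s a) - m s') := by
    intro s'; rw [hZ s']; ring
  have hmean : ∑ s', P s a s' * Z s' = (Q' s a - Qstar s a) ^ 2 := by
    have h1 : ∀ s' : S, P s a s' * Z s' =
        ((Q' s a - Qstar s a) ^ 2
          + 2 * (Q' s a - Qstar s a) * (Qstar s a - r s a)) * P s a s'
        - 2 * (Q' s a - Qstar s a) * (P s a s' * m s') := by
      intro s'; rw [hZ' s']; ring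
    rw [Finset.sum_congr rfl fun s' _ => h1 s', Finset.sum_sub_distrib,
      ← Finset.mul_sum, ← Finset.mul_sum, hPsum, mul_one, ← hE, hEq]
    ring
  refine ⟨hmean, ?_⟩
  have hdev : ∀ s', (Z s' - ∑ s'', P s a s'' * Z s'') ^ 2 =
      4 * (Q' s a - Qstar s a) ^ 2 * (E - m s') ^ 2 := by
    intro s'; rw [hmean, hZ' s', hEq]; ring
  calc ∑ s', P s a s' * (Z s' - ∑ s'', P s a s'' * Z s'') ^ 2
      = ∑ s', P s a s' * (4 * (Q' s a - Qstar s a) ^ 2 * (E - m s') ^ 2) := by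
        exact Finset.sum_congr rfl fun s' _ => by rw [hdev s']
    _ ≤ ∑ s', P s a s' * (4 * (Q' s a - Qstar s a) ^ 2 * H ^ 2) := by
        refine Finset.sum_le_sum fun s' _ => ?_
        have hsq : (E - m s') ^ 2 ≤ H ^ 2 :=
          sq_le_sq' (by linarith [hm0 s', hmH s', hE0, hEH])
            (by linarith [hm0 s', hmH s', hE0, hEH])
        exact mul_le_mul_of_nonneg_left
          (mul_le_mul_of_nonneg_left hsq (by positivity)) (hPnn s a s')
    _ = 4 * (Q' s a - Qstar s a) ^ 2 * H ^ 2 := by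
        rw [← Finset.sum_mul, hPsum, one_mul]
    _ ≤ 16 * H ^ 2 * (Q' s a - Qstar s a) ^ 2 := by nlinarith [sq_nonneg (Q' s a - Qstar s a), sq_nonneg H]
end
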